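/- arXiv:2407.14866 — 3 statements merged into one kernel-verified Lean document; each statement's English description precedes it below -/
import Mathlib

section
/- Let q ≥ 2 and n ≥ 1 be integers, and suppose S = (s_i) is a special orientable sequence of order n and period m over ℤ_q. Suppose w_q(S), the weight of S modulo q, has additive order h in ℤ_q. Then every T ∈ D^{-1}(S) is a special orientable sequence of order n+1 of period hm, any two elements of D^{-1}(S) are translates of one another, and D^{-1}(S) consists of h shifts of each of q/h mutually special-o-disjoint special orientable sequences of order n+1 and period hm which are translates of one another. -/
namespace OSeq

variable {q : ℕ}

/-- The `n`-tuple (window) of the sequence `s` at position `i`. -/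
def window (s : ℤ → ZMod q) (n : ℕ) (i : ℤ) : Fin n → ZMod q :=
  fun k => s (i + (k : ℕ))

/-- The reverse of an `n`-tuple. -/
def tupRev {n : ℕ} (u : Fin n → ZMod q) : Fin n → ZMod q :=
  fun k => u k.rev

/-- `m` is the (least) period of the periodic sequence `s`. -/
def IsPeriod (s : ℤ → ZMod q) (m : ℕ) : Prop :=
  0 < m ∧ (∀ i : ℤ, s (i + (m : ℤ)) = s i) ∧
    ∀ m' : ℕ, 0 < m' → (∀ i : ℤ, s (i + (m' : ℤ)) = s i) → m ≤ m'

/-- `s` is an `n`-window sequence of period `m`. -/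
def IsNWindowSeq (s : ℤ → ZMod q) (n m : ℕ) : Prop :=
  IsPeriod s m ∧ ∀ i j : ℤ, window s n i = window s n j → i ≡ j [ZMOD (m : ℤ)]

/-- `s` is an orientable sequence of order `n` and period `m`. -/
def IsOS (s : ℤ → ZMod q) (n m : ℕ) : Prop :=
  IsNWindowSeq s n m ∧ ∀ i j : ℤ, window s n i ≠ tupRev (window s n j)

/-- `s` is a negative orientable sequence of order `n` and period `m`. -/
def IsNOS (s : ℤ → ZMod q) (n m : ℕ) : Prop :=
  IsNWindowSeq s n m ∧ ∀ i j : ℤ, window s n i ≠ - tupRev (window s n j)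

/-- `s` is a special orientable sequence of order `n` and period `m`:
orientable and also negative orientable. -/
def IsSpecialOS (s : ℤ → ZMod q) (n m : ℕ) : Prop :=
  IsOS s n m ∧ ∀ i j : ℤ, window s n i ≠ - tupRev (window s n j)

/-- The weight modulo `q` of one period of `s`. -/
def wq (s : ℤ → ZMod q) (m : ℕ) : ZMod q :=
  ∑ i ∈ Finset.range m, s (i : ℤ)

/-- The alternating sign weight modulo `q` of one period of `s`. -/
def wqA (s : ℤ → ZMod q) (m : ℕ) : ZMod q :=
  ∑ i ∈ Finset.range m, (-1 : ZMod q) ^ (m - 1 - i) * s (i : ℤ)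

/-- The Lempel homomorphism `D` on sequences. -/
def D (t : ℤ → ZMod q) : ℤ → ZMod q := fun j => t (j + 1) - t j

/-- The homomorphism `A` on sequences. -/
def A (t : ℤ → ZMod q) : ℤ → ZMod q := fun j => t (j + 1) + t j

/-- Shift of a sequence by `c`. -/
def shift (t : ℤ → ZMod q) (c : ℤ) : ℤ → ZMod q := fun i => t (i + c)

/-- `t'` is a translate of `t`. -/
def IsTranslate (t t' : ℤ → ZMod q) : Prop := ∃ c : ZMod q, ∀ i : ℤ, t' i = t i + c

/-- `t'` is an alternating sign translate of `t`. -/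
def IsAltTranslate (t t' : ℤ → ZMod q) : Prop :=
  ∃ c : ZMod q, ∀ i : ℤ, t' i = t i + (if i % 2 = 0 then c else -c)

/-- Two sequences are (`n`-window) disjoint. -/
def WindowDisjoint (n : ℕ) (s t : ℤ → ZMod q) : Prop :=
  ∀ i j : ℤ, window s n i ≠ window t n j

/-- Orientable-disjoint. -/
def ODisjoint (n : ℕ) (s t : ℤ → ZMod q) : Prop :=
  WindowDisjoint n s t ∧ ∀ i j : ℤ, window s n i ≠ tupRev (window t n j)

/-- Negative orientable-disjoint (no-disjoint). -/
def NODisjoint (n : ℕ) (s t : ℤ → ZMod q) : Prop :=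
  WindowDisjoint n s t ∧ ∀ i j : ℤ, window s n i ≠ - tupRev (window t n j)

/-- Special-orientable-disjoint. -/
def SpecialODisjoint (n : ℕ) (s t : ℤ → ZMod q) : Prop :=
  ODisjoint n s t ∧ ∀ i j : ℤ, window s n i ≠ - tupRev (window t n j)

/-- The string `a^t` appears in `s`. -/
def HasString (s : ℤ → ZMod q) (a : ZMod q) (t : ℕ) : Prop :=
  ∃ j : ℤ, ∀ k : ℕ, k < t → s (j + (k : ℤ)) = a

/-- There is a run `a^t` of `a` in `s` starting at position `j`. -/
def IsRunAt (s : ℤ → ZMod q) (a : ZMod q) (j : ℤ) (t : ℕ) : Prop :=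
  (∀ k : ℕ, k < t → s (j + (k : ℤ)) = a) ∧ s (j - 1) ≠ a ∧ s (j + (t : ℤ)) ≠ a

/-- `a^t` is a maximal run of `a` in `s`: the string `a^t` appears and every
string `a^{t'}` appearing in `s` has `t' ≤ t`. -/
def IsMaxRun (s : ℤ → ZMod q) (a : ZMod q) (t : ℕ) : Prop :=
  HasString s a t ∧ ∀ t' : ℕ, HasString s a t' → t' ≤ t

/-- `k`-th entry of the alternating string `a, -a, a, -a, ...`. -/
def altVal (a : ZMod q) (k : ℕ) : ZMod q := if k % 2 = 0 then a else -a

/-- The signed string `ạ^t` (alternating `a, -a, ...`) appears in `s`. -/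
def HasSignedString (s : ℤ → ZMod q) (a : ZMod q) (t : ℕ) : Prop :=
  ∃ j : ℤ, ∀ k : ℕ, k < t → s (j + (k : ℤ)) = altVal a k

/-- There is a signed run `ạ^t` of `a` in `s` starting at position `j`. -/
def IsSignedRunAt (s : ℤ → ZMod q) (a : ZMod q) (j : ℤ) (t : ℕ) : Prop :=
  (∀ k : ℕ, k < t → s (j + (k : ℤ)) = altVal a k) ∧
    s (j - 1) ≠ -a ∧ s (j + (t : ℤ)) ≠ altVal a t

/-- `ạ^t` is a maximal signed run of `a` in `s`. -/
def IsMaxSignedRun (s : ℤ → ZMod q) (a : ZMod q) (t : ℕ) : Prop :=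
  HasSignedString s a t ∧ ∀ t' : ℕ, HasSignedString s a t' → t' ≤ t

/-- The sequence obtained from the ring sequence `[s_0,...,s_{m-1}]` of `s` by
inserting one extra symbol `a` at ring position `r`, i.e. with ring sequence
`[s_0,...,s_{r-1}, a, s_r, ..., s_{m-1}]` of length `m+1`. -/
def insert1 (s : ℤ → ZMod q) (m r : ℕ) (a : ZMod q) : ℤ → ZMod q :=
  fun j =>
    let j' := (j % ((m : ℤ) + 1)).toNat
    if j' < r then s (j' : ℤ) else if j' = r then a else s ((j' : ℤ) - 1)

/-- The sequence obtained from the ring sequence `[s_0,...,s_{m-1}]` of `s` by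
inserting the two symbols `a, -a` at ring position `r`, i.e. with ring sequence
`[s_0,...,s_{r-1}, a, -a, s_r, ..., s_{m-1}]` of length `m+2`. -/
def insert2 (s : ℤ → ZMod q) (m r : ℕ) (a : ZMod q) : ℤ → ZMod q :=
  fun j =>
    let j' := (j % ((m : ℤ) + 2)).toNat
    if j' < r then s (j' : ℤ)
    else if j' = r then a
    else if j' = r + 1 then -a
    else s ((j' : ℤ) - 2)

/-- The operation `E_a` (with the convention `E_0(S) = S`). -/
def Emod (s : ℤ → ZMod q) (m r : ℕ) (a : ZMod q) : ℤ → ZMod q :=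
  if a = 0 then s else insert1 s m r a

/-- A sequence is good (for order `n`) if every run of `0` has length at most `n-2`. -/
def GoodSeq (s : ℤ → ZMod q) (n : ℕ) : Prop :=
  ∀ t : ℕ, HasString s 0 t → t ≤ n - 2

/-- A tuple is uniform if it is constant. -/
def Uniform {n : ℕ} (u : Fin n → ZMod q) : Prop := ∃ c : ZMod q, ∀ i, u i = c

/-- A tuple is symmetric if it equals its own reverse. -/
def Symm {n : ℕ} (u : Fin n → ZMod q) : Prop := ∀ i : Fin n, u i = u i.rev

/-- An `n`-tuple is `m`-symmetric (`m ≤ n`) if `u_i = u_{m-1-i}` for `0 ≤ i ≤ m-1`. -/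
def MSymm {n : ℕ} (u : Fin n → ZMod q) (m : ℕ) (hm : m ≤ n) : Prop :=
  ∀ i : Fin m, u (Fin.castLE hm i) = u (Fin.castLE hm i.rev)

/-- An `n`-tuple (`n ≥ 2`) is alternating. -/
def Alternating {n : ℕ} (hn : 2 ≤ n) (u : Fin n → ZMod q) : Prop :=
  u ⟨0, by omega⟩ ≠ u ⟨1, by omega⟩ ∧
    ∀ i : Fin n, u i = if (i : ℕ) % 2 = 0 then u ⟨0, by omega⟩ else u ⟨1, by omega⟩

/-- `L_n(v)`: the set of `n`-tuples whose first `n-r` entries agree with the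
`(n-r)`-tuple `v`. -/
def Lset (n r : ℕ) (v : Fin (n - r) → ZMod q) : Set (Fin n → ZMod q) :=
  {u | ∀ i : Fin (n - r), u (Fin.castLE (Nat.sub_le n r) i) = v i}

/-- The `n`-tuple `u` appears in the sequence `s`. -/
def AppearsIn (s : ℤ → ZMod q) (n : ℕ) (u : Fin n → ZMod q) : Prop :=
  ∃ i : ℤ, window s n i = u

end OSeq

open OSeq

/-!
A preimage `t` of `s` under `D` is determined by `s` up to a translate, and over one period
of `s` it increases by `w = w_q(S)`: `t (i + d m) = t i + d • w`. Hence `t` has least period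
`h m`. Differencing an `(n+1)`-window of `t` gives the `n`-window of `s` at the same place,
so equal windows of `t` sit at positions `i` and `i + d m` with `d • w = 0`, i.e. `h ∣ d`;
and since differencing a reversed window negates it, a reversed (negated reversed) window of
`t` would produce a negated reversed (reversed) window of `s`. Finally, for an antiderivative
`σ` the preimages are the translates `σ + c`, and writing `c = k + α • w` with `k < q / h`,
`α < h` (coset representatives of the subgroup generated by `w`) exhibits `σ + c` as the
shift of `σ + k` by `α m`.
-/

open Function

namespace ZMod

variable {q : ℕ} [NeZero q] (x : ZMod q)

theorem addOrderOf_dvd_self : addOrderOf x ∣ q := by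
  simpa [ZMod.card] using addOrderOf_dvd_card (x := x)

theorem div_addOrderOf_dvd_val : q / addOrderOf x ∣ x.val := by
  rw [← natCast_zmod_val x, addOrderOf_coe _ (NeZero.ne q), val_natCast_of_lt (val_lt x),
    Nat.div_div_self (Nat.gcd_dvd_left q x.val) (NeZero.ne q)]
  exact Nat.gcd_dvd_right q x.val

theorem eq_of_natCast_sub_mem_zmultiples {k k' : ℕ} (hk : k < q / addOrderOf x)
    (hk' : k' < q / addOrderOf x) (h : (k : ZMod q) - k' ∈ AddSubgroup.zmultiples x) :
    k = k' := by
  let ψ : ZMod q →+* ZMod (q / addOrderOf x) :=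
    castHom (Nat.div_dvd_of_dvd (addOrderOf_dvd_self x)) _
  have hx : ψ x = 0 := by
    have := (ZMod.natCast_eq_zero_iff x.val (q / addOrderOf x)).mpr (div_addOrderOf_dvd_val x)
    rwa [← map_natCast ψ, natCast_zmod_val] at this
  obtain ⟨d, hd⟩ := AddSubgroup.mem_zmultiples_iff.mp h
  have := congrArg ψ hd
  rw [map_zsmul, hx, smul_zero, map_sub, map_natCast, map_natCast, eq_comm, sub_eq_zero,
    ZMod.natCast_eq_natCast_iff', Nat.mod_eq_of_lt hk, Nat.mod_eq_of_lt hk'] at this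
  exact this

theorem bijective_natCast_add_nsmul :
    Bijective fun p : Fin (q / addOrderOf x) × Fin (addOrderOf x) =>
      (p.1 : ZMod q) + (p.2 : ℕ) • x := by
  refine (Fintype.bijective_iff_injective_and_card _).mpr ⟨?_, ?_⟩
  · rintro ⟨k, α⟩ ⟨k', α'⟩ he
    dsimp only at he
    obtain rfl : k = k' := Fin.ext <| eq_of_natCast_sub_mem_zmultiples x k.2 k'.2 <|
      AddSubgroup.mem_zmultiples_iff.mpr ⟨(α' : ℤ) - α, by
        rw [sub_zsmul, natCast_zsmul, natCast_zsmul]; linear_combination -he⟩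
    obtain rfl : α = α' := Fin.ext <| nsmul_injOn_Iio_addOrderOf α.2 α'.2 (add_left_cancel he)
    rfl
  · simp [ZMod.card, Nat.div_mul_cancel (addOrderOf_dvd_self x)]

end ZMod

namespace OSeq

variable {q : ℕ}

theorem D_add_const (t : ℤ → ZMod q) (c : ZMod q) : D (fun i => t i + c) = D t := by
  funext i
  simp only [D]
  ring

theorem D_shift (t : ℤ → ZMod q) (c : ℤ) : D (shift t c) = shift (D t) c := by
  funext i
  simp only [D, shift, add_right_comm]

theorem periodic_D {t : ℤ → ZMod q} {c : ℤ} (ht : Periodic t c) : Periodic (D t) c :=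
  fun i => by simp only [D, add_right_comm i c 1, ht (i + 1), ht i]

theorem exists_D_eq (s : ℤ → ZMod q) : ∃ t, D t = s := by
  refine ⟨fun i => (∑ j ∈ Finset.range i.toNat, s j) -
      ∑ j ∈ Finset.range (-i).toNat, s (-(j : ℤ) - 1), ?_⟩
  funext i
  simp only [D]
  rcases le_or_gt 0 i with hi | hi
  · rw [show (-(i + 1)).toNat = 0 by omega, show (-i).toNat = 0 by omega,
      show (i + 1).toNat = i.toNat + 1 by omega, Finset.sum_range_succ, Int.toNat_of_nonneg hi]
    simp
  · rw [show (i + 1).toNat = 0 by omega, show i.toNat = 0 by omega,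
      show (-i).toNat = (-(i + 1)).toNat + 1 by omega, Finset.sum_range_succ,
      show -(((-(i + 1)).toNat : ℕ) : ℤ) - 1 = i by omega]
    simp

theorem isTranslate_of_D_eq {t t' : ℤ → ZMod q} (h : D t = D t') : IsTranslate t t' := by
  have hdiff : Periodic (fun i => t' i - t i) 1 := fun i => by
    have hi := congrFun h i
    simp only [D] at hi
    linear_combination -hi
  refine ⟨t' 0 - t 0, fun i => ?_⟩
  have := hdiff.int_mul_eq i
  simp only [mul_one] at this
  linear_combination this

section Period

variable {s t : ℤ → ZMod q} {m : ℕ}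

theorem add_period_of_D_eq (ht : D t = s) (hs : Periodic s m) (i : ℤ) :
    t (i + m) = t i + wq s m := by
  obtain ⟨c, hc⟩ := isTranslate_of_D_eq (t := t) (t' := shift t m)
    (by rw [D_shift, ht, show shift s m = s from funext hs])
  have hc' : c = wq s m := by
    have h0 := hc 0
    have hsum := Finset.sum_range_sub (fun j : ℕ => t j) m
    simp only [wq, ← ht, D, shift, zero_add, Nat.cast_succ, Nat.cast_zero] at h0 hsum ⊢
    linear_combination -h0 - hsum
  simpa [shift, hc'] using hc i

theorem add_mul_period_of_D_eq (ht : D t = s) (hs : Periodic s m) (i d : ℤ) :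
    t (i + d * m) = t i + d • wq s m := by
  have hg : Periodic (fun d : ℤ => t (i + d * m) - d • wq s m) 1 := fun d => by
    simp only [add_mul, one_mul, ← add_assoc, add_period_of_D_eq ht hs, add_zsmul, one_zsmul]
    abel
  simpa [sub_eq_iff_eq_add] using hg.int_mul_eq d

theorem IsPeriod.dvd (hs : IsPeriod s m) {p : ℕ} (hsp : Periodic s p) : m ∣ p := by
  have hmod : Periodic s (p % m : ℕ) := by
    have hdiv : ((p % m : ℕ) : ℤ) + m * (p / m : ℕ) = p := by
      exact_mod_cast Nat.mod_add_div p m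
    rw [show ((p % m : ℕ) : ℤ) = p - (p / m : ℕ) * m by linarith]
    exact hsp.sub_period ((show Periodic s m from hs.2.1).nat_mul _)
  by_contra hnd
  have := hs.2.2 _ (Nat.pos_of_ne_zero (mt Nat.dvd_of_mod_eq_zero hnd)) hmod
  exact absurd (Nat.mod_lt p hs.1) (not_lt.mpr this)

theorem isPeriod_of_D_eq [NeZero q] (hs : IsPeriod s m) (ht : D t = s) :
    IsPeriod t (addOrderOf (wq s m) * m) := by
  refine ⟨Nat.mul_pos (addOrderOf_pos _) hs.1, fun i => ?_, fun p hp htp => ?_⟩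
  · rw [Nat.cast_mul, add_mul_period_of_D_eq ht hs.2.1, natCast_zsmul,
      addOrderOf_nsmul_eq_zero, add_zero]
  · obtain ⟨a, rfl⟩ := hs.dvd (ht ▸ periodic_D htp)
    have hwa : a • wq s m = 0 := by
      have := add_mul_period_of_D_eq ht hs.2.1 0 a
      rwa [← Nat.cast_mul, mul_comm, htp 0, natCast_zsmul, left_eq_add] at this
    obtain ⟨b, rfl⟩ := addOrderOf_dvd_of_nsmul_eq_zero hwa
    exact Nat.le_of_dvd hp ⟨b, by ring⟩

end Period

theorem window_D (t : ℤ → ZMod q) (n : ℕ) (i : ℤ) :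
    window (D t) n i = fun k => window t (n + 1) i k.succ - window t (n + 1) i k.castSucc := by
  funext k
  simp [window, D, add_assoc]

section Window

variable {n : ℕ} {t t' : ℤ → ZMod q}

theorem window_D_eq_of_window_eq {i j : ℤ} (H : window t (n + 1) i = window t' (n + 1) j) :
    window (D t) n i = window (D t') n j := by
  rw [window_D, window_D, H]

theorem window_D_eq_neg_smul_tupRev {i j : ℤ} (c : ZMod q)
    (H : window t (n + 1) i = c • tupRev (window t' (n + 1) j)) :
    window (D t) n i = -c • tupRev (window (D t') n j) := by
  funext k
  simp only [window_D, H, tupRev, Pi.smul_apply, smul_eq_mul, Fin.rev_succ, Fin.rev_castSucc]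
  ring

variable {s : ℤ → ZMod q} {m : ℕ}

theorem window_ne_tupRev_of_D_eq (hs : ∀ i j, window s n i ≠ -tupRev (window s n j))
    (ht : D t = s) (ht' : D t' = s) (i j : ℤ) :
    window t (n + 1) i ≠ tupRev (window t' (n + 1) j) := fun H => by
  have H' := window_D_eq_neg_smul_tupRev (t := t) (t' := t') 1 (by rwa [one_smul])
  rw [ht, ht'] at H'
  exact hs i j (by simpa using H')

theorem window_ne_neg_tupRev_of_D_eq (hs : ∀ i j, window s n i ≠ tupRev (window s n j))
    (ht : D t = s) (ht' : D t' = s) (i j : ℤ) :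
    window t (n + 1) i ≠ -tupRev (window t' (n + 1) j) := fun H => by
  have H' := window_D_eq_neg_smul_tupRev (t := t) (t' := t') (-1) (by rwa [neg_one_smul])
  rw [ht, ht'] at H'
  exact hs i j (by simpa using H')

theorem IsNWindowSeq.exists_eq_add_mul_of_window_eq (hs : IsNWindowSeq s n m) (ht : D t = s)
    (ht' : D t' = s) {i j : ℤ} (H : window t (n + 1) i = window t' (n + 1) j) :
    ∃ d : ℤ, j = i + d * m ∧ t i = t' i + d • wq s m := by
  have H' := window_D_eq_of_window_eq H
  rw [ht, ht'] at H'
  obtain ⟨d, hd⟩ := (hs.2 i j H').dvd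
  have hij : j = i + d * m := by linarith
  refine ⟨d, hij, ?_⟩
  have h0 : t i = t' j := by simpa [window] using congrFun H 0
  rw [h0, hij, add_mul_period_of_D_eq ht' hs.1.2.1]

theorem isNWindowSeq_of_D_eq [NeZero q] (hs : IsNWindowSeq s n m) (ht : D t = s) :
    IsNWindowSeq t (n + 1) (addOrderOf (wq s m) * m) := by
  refine ⟨isPeriod_of_D_eq hs.1 ht, fun i j H => ?_⟩
  obtain ⟨d, rfl, hd⟩ := hs.exists_eq_add_mul_of_window_eq ht ht H
  obtain ⟨e, rfl⟩ := addOrderOf_dvd_iff_zsmul_eq_zero.mpr (left_eq_add.mp hd)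
  exact Int.modEq_iff_dvd.mpr ⟨e, by push_cast; ring⟩

theorem isSpecialOS_of_D_eq [NeZero q] (hs : IsSpecialOS s n m) (ht : D t = s) :
    IsSpecialOS t (n + 1) (addOrderOf (wq s m) * m) :=
  ⟨⟨isNWindowSeq_of_D_eq hs.1.1 ht, window_ne_tupRev_of_D_eq hs.2 ht ht⟩,
    window_ne_neg_tupRev_of_D_eq hs.1.2 ht ht⟩

theorem specialODisjoint_of_D_eq (hs : IsSpecialOS s n m) (ht : D t = s) (ht' : D t' = s)
    (hc : t' 0 - t 0 ∉ AddSubgroup.zmultiples (wq s m)) : SpecialODisjoint (n + 1) t t' := by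
  refine ⟨⟨fun i j H => hc ?_, window_ne_tupRev_of_D_eq hs.2 ht ht'⟩,
    window_ne_neg_tupRev_of_D_eq hs.1.2 ht ht'⟩
  obtain ⟨d, -, hd⟩ := hs.1.1.exists_eq_add_mul_of_window_eq ht ht' H
  obtain ⟨c, hc⟩ := isTranslate_of_D_eq (ht.trans ht'.symm)
  rw [hc i] at hd
  rw [hc 0, add_sub_cancel_left]
  exact AddSubgroup.mem_zmultiples_iff.mpr ⟨-d, by rw [neg_zsmul]; linear_combination hd⟩

end Window

end OSeq

theorem Dinv_of_special_orientable_general {q n m h : ℕ} (hq : 2 ≤ q)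
    (s : ℤ → ZMod q) (hS : IsSpecialOS s n m) (hh : addOrderOf (wq s m) = h) :
    (∀ t : ℤ → ZMod q, D t = s → IsSpecialOS t (n + 1) (h * m)) ∧
    (∀ t t' : ℤ → ZMod q, D t = s → D t' = s → IsTranslate t t') ∧
    (∃ F : Fin (q / h) → ℤ → ZMod q,
      (∀ k, D (F k) = s ∧ IsSpecialOS (F k) (n + 1) (h * m)) ∧
      (∀ k k', k ≠ k' → SpecialODisjoint (n + 1) (F k) (F k')) ∧
      (∀ k k', IsTranslate (F k) (F k')) ∧
      (∀ t : ℤ → ZMod q, D t = s ↔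
        ∃ (k : Fin (q / h)) (α : Fin h), t = shift (F k) ((α : ℕ) * (m : ℤ))) ∧
      Function.Injective
        (fun p : Fin (q / h) × Fin h => shift (F p.1) ((p.2 : ℕ) * (m : ℤ)))) := by
  have : NeZero q := ⟨by omega⟩
  subst hh
  obtain ⟨σ, hσ⟩ := exists_D_eq s
  have hper : Periodic s m := hS.1.1.1.2.1
  have hDσ (c : ZMod q) : D (fun i => σ i + c) = s := (D_add_const σ c).trans hσ
  have hshift (c : ZMod q) (α : ℕ) :
      shift (fun i => σ i + c) (α * m) = fun i => σ i + (c + α • wq s m) := by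
    funext i
    rw [shift, add_mul_period_of_D_eq hσ hper, natCast_zsmul]
    ring
  have hbij := ZMod.bijective_natCast_add_nsmul (wq s m)
  refine ⟨fun t ht => isSpecialOS_of_D_eq hS ht,
    fun t t' ht ht' => isTranslate_of_D_eq (ht.trans ht'.symm),
    fun k i => σ i + (k : ℕ), fun k => ⟨hDσ _, isSpecialOS_of_D_eq hS (hDσ _)⟩,
    fun k k' hkk' => specialODisjoint_of_D_eq hS (hDσ _) (hDσ _) ?_,
    fun k k' => ⟨(k' : ℕ) - (k : ℕ), fun i => by ring⟩, fun t => ⟨fun ht => ?_, ?_⟩,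
    fun p p' he => hbij.1 ?_⟩
  · rw [add_sub_add_left_eq_sub]
    exact fun hmem => hkk' (Fin.ext (ZMod.eq_of_natCast_sub_mem_zmultiples _ k'.2 k.2 hmem).symm)
  · obtain ⟨c, hc⟩ := isTranslate_of_D_eq (hσ.trans ht.symm)
    obtain ⟨⟨k, α⟩, hkα⟩ := hbij.2 c
    dsimp only at hkα
    exact ⟨k, α, by rw [hshift, hkα]; exact funext hc⟩
  · rintro ⟨k, α, rfl⟩
    rw [hshift]
    exact hDσ _
  · simpa only [hshift, add_right_inj] using congrFun he 0

/-- If `S` is a special orientable sequence of order `n` and period `m` over `ℤ_q`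
and `w_q(S)` has additive order `h` in `ℤ_q`, then every `T ∈ D⁻¹(S)` is a
special orientable sequence of order `n+1` and period `hm`, any two elements of
`D⁻¹(S)` are translates of one another, and `D⁻¹(S)` consists of `h` shifts of
each of `q/h` mutually special-o-disjoint special orientable sequences of order
`n+1` and period `hm` which are translates of one another. -/
theorem Dinv_of_special_orientable {q n m h : ℕ} (hq : 2 ≤ q) (hn : 1 ≤ n)
    (s : ℤ → ZMod q) (hS : IsSpecialOS s n m) (hh : addOrderOf (wq s m) = h) :
    (∀ t : ℤ → ZMod q, D t = s → IsSpecialOS t (n + 1) (h * m)) ∧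
    (∀ t t' : ℤ → ZMod q, D t = s → D t' = s → IsTranslate t t') ∧
    (∃ F : Fin (q / h) → ℤ → ZMod q,
      (∀ k, D (F k) = s ∧ IsSpecialOS (F k) (n + 1) (h * m)) ∧
      (∀ k k', k ≠ k' → SpecialODisjoint (n + 1) (F k) (F k')) ∧
      (∀ k k', IsTranslate (F k) (F k')) ∧
      (∀ t : ℤ → ZMod q, D t = s ↔
        ∃ (k : Fin (q / h)) (α : Fin h), t = shift (F k) ((α : ℕ) * (m : ℤ))) ∧
      Function.Injective
        (fun p : Fin (q / h) × Fin h => shift (F p.1) ((p.2 : ℕ) * (m : ℤ)))) :=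
  Dinv_of_special_orientable_general hq s hS hh
end

section
/- Let q ≥ 2 and n ≥ 1 be integers, and suppose S = (s_i) is an orientable sequence of order n and period m over ℤ_q whose weight w_q(S) modulo q has additive order q in ℤ_q. Suppose t > 0 is the length of a maximal run of 0 in S. Then every T ∈ D^{-1}(S) has period qm, and for each a ∈ ℤ_q, T contains a maximal run a^{t+1}. -/
open OSeq

/-! Summing `D T = S` over a period gives `T (i + m) = T i + w` with `w = w_q(S)`, hence
`T (i + k m) = T i + k w`. As `w` has order `q`, `q m` is a period of `T`; conversely a period
`m'` of `T` is one of `S`, so `m' = d m`, and `T (i + d m) = T i` forces `q ∣ d`. A run `0^t` of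
`S` at `j` makes `T` constant on `j, …, j + t`; since the multiples of `w` exhaust `ℤ_q`, shifting
by suitable multiples of `m` moves this into a string `a^{t+1}` for every `a`, while a string
`a^{t'}` of `T` yields `0^{t'-1}` in `S`. -/

theorem exists_nsmul_eq_of_addOrderOf_eq_card {G : Type*} [AddGroup G] [Finite G] {w : G}
    (hw : addOrderOf w = Nat.card G) (b : G) : ∃ k : ℕ, k • w = b := by
  have htop : AddSubgroup.zmultiples w = ⊤ :=
    AddSubgroup.eq_top_of_card_eq _ (by rw [Nat.card_zmultiples, hw])
  exact mem_multiples_iff_mem_zmultiples.2 (htop ▸ AddSubgroup.mem_top b)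

theorem Function.Periodic.sum_range_add {M : Type*} [AddCancelCommMonoid M] {f : ℤ → M} {m : ℕ}
    (h : Function.Periodic f m) (i : ℤ) :
    ∑ r ∈ Finset.range m, f (i + r) = ∑ r ∈ Finset.range m, f r := by
  have shift_one : Function.Periodic (fun i => ∑ r ∈ Finset.range m, f (i + r)) 1 := fun i => by
    have h₁ := Finset.sum_range_succ (fun r : ℕ => f (i + r)) m
    have h₂ := Finset.sum_range_succ' (fun r : ℕ => f (i + r)) m
    have hshift : ∑ r ∈ Finset.range m, f (i + 1 + r)
        = ∑ r ∈ Finset.range m, f (i + (r + 1 : ℕ)) :=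
      Finset.sum_congr rfl fun r _ => by push_cast; ring_nf
    rw [h i] at h₁
    rw [Nat.cast_zero, add_zero] at h₂
    exact hshift.trans (add_right_cancel (h₂.symm.trans h₁))
  simpa using shift_one.int_mul_eq i

namespace OSeq

open Function Finset

variable {q : ℕ} {T : ℤ → ZMod q} {m : ℕ}

theorem D_periodic {c : ℤ} (h : Periodic T c) : Periodic (D T) c := fun i => by
  simp only [D, add_right_comm i c 1, h (i + 1), h i]

theorem IsPeriod.dvd_s13 {s : ℤ → ZMod q} {m' : ℕ} (hP : IsPeriod s m) (h : Periodic s m') :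
    m ∣ m' := by
  obtain ⟨hm, hper, hmin⟩ := hP
  have hmod : Periodic s (m' % m : ℕ) := by
    have hsub := h.sub_period ((show Periodic s m from hper).nat_mul (m' / m))
    have hcast : ((m' % m : ℕ) : ℤ) = m' - (m' / m : ℕ) * m := by
      apply eq_sub_of_add_eq
      rw [mul_comm]
      exact_mod_cast Nat.mod_add_div m' m
    rwa [hcast]
  by_contra hndvd
  have := hmin _ (Nat.pos_of_ne_zero fun h0 => hndvd (Nat.dvd_of_mod_eq_zero h0)) hmod
  exact absurd (Nat.mod_lt m' hm) (not_lt.2 this)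

theorem apply_add_eq_add_sum_D (T : ℤ → ZMod q) (i : ℤ) (k : ℕ) :
    T (i + k) = T i + ∑ r ∈ range k, D T (i + r) := by
  simpa [D, add_assoc] using eq_sum_range_sub (fun r : ℕ => T (i + r)) k

theorem apply_add_period (h : Periodic (D T) m) (i : ℤ) : T (i + m) = T i + wq (D T) m := by
  rw [apply_add_eq_add_sum_D T i m, h.sum_range_add]
  rfl

theorem apply_add_mul_period (h : Periodic (D T) m) (k : ℕ) (i : ℤ) :
    T (i + (k * m : ℕ)) = T i + k • wq (D T) m := by
  induction k with
  | zero => simp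
  | succ k ih =>
    rw [Nat.succ_mul, Nat.cast_add, ← add_assoc, apply_add_period h, ih, succ_nsmul, add_assoc]

theorem isPeriod_of_isPeriod_D [NeZero q] (hP : IsPeriod (D T) m)
    (hw : addOrderOf (wq (D T) m) = q) : IsPeriod T (q * m) := by
  have hper : Periodic (D T) m := hP.2.1
  refine ⟨Nat.mul_pos (Nat.pos_of_neZero q) hP.1, fun i => ?_, fun m' hm' hT => ?_⟩
  · have hqw := addOrderOf_nsmul_eq_zero (wq (D T) m)
    rw [hw] at hqw
    rw [apply_add_mul_period hper, hqw, add_zero]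
  · obtain ⟨d, rfl⟩ := hP.dvd_s13 (D_periodic hT)
    have hd : d • wq (D T) m = 0 := by
      have := apply_add_mul_period hper d 0
      rwa [mul_comm d, hT 0, left_eq_add] at this
    have hqd : q ∣ d := hw ▸ addOrderOf_dvd_of_nsmul_eq_zero hd
    rw [mul_comm m]
    exact Nat.mul_le_mul_right m (Nat.le_of_dvd (Nat.pos_of_mul_pos_left hm') hqd)

theorem hasString_D_zero {a : ZMod q} {t : ℕ} (h : HasString T a (t + 1)) :
    HasString (D T) 0 t := by
  obtain ⟨j, hj⟩ := h
  refine ⟨j, fun k hk => ?_⟩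
  have h₀ := hj k (by omega)
  have h₁ := hj (k + 1) (by omega)
  push_cast at h₁
  simp only [D, add_assoc, h₀, h₁, sub_self]

theorem apply_add_eq_of_D_eq_zero {j : ℤ} {t : ℕ} (h : ∀ k < t, D T (j + k) = 0) {k : ℕ}
    (hk : k ≤ t) : T (j + k) = T j := by
  rw [apply_add_eq_add_sum_D T j k, sum_eq_zero fun r hr => h r ((mem_range.1 hr).trans_le hk),
    add_zero]

theorem isMaxRun_of_isMaxRun_D [NeZero q] (hper : Periodic (D T) m)
    (hw : addOrderOf (wq (D T) m) = q) {t : ℕ} (hrun : IsMaxRun (D T) 0 t) (a : ZMod q) :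
    IsMaxRun T a (t + 1) := by
  obtain ⟨⟨j, hj⟩, hmax⟩ := hrun
  obtain ⟨k, hk⟩ :=
    exists_nsmul_eq_of_addOrderOf_eq_card (hw.trans (Nat.card_zmod q).symm) (a - T j)
  refine ⟨⟨j + (k * m : ℕ), fun r hr => ?_⟩, fun t' hstr => ?_⟩
  · rw [add_right_comm, apply_add_mul_period hper, apply_add_eq_of_D_eq_zero hj (by omega), hk,
      add_sub_cancel]
  · cases t' with
    | zero => omega
    | succ t' => exact Nat.succ_le_succ (hmax t' (hasString_D_zero hstr))

end OSeq

theorem Dinv_period_and_maximal_runs_general {q n m t : ℕ} (hq : 2 ≤ q)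
    (s : ℤ → ZMod q) (hS : IsOS s n m) (hw : addOrderOf (wq s m) = q)
    (hrun : IsMaxRun s 0 t) :
    ∀ T : ℤ → ZMod q, D T = s →
      IsPeriod T (q * m) ∧ ∀ a : ZMod q, IsMaxRun T a (t + 1) := by
  have : NeZero q := ⟨by omega⟩
  rintro T rfl
  have hP : IsPeriod (D T) m := hS.1.1
  exact ⟨isPeriod_of_isPeriod_D hP hw, isMaxRun_of_isMaxRun_D hP.2.1 hw hrun⟩

/-- If `S` is an orientable sequence of order `n` and period `m` over `ℤ_q` whose
weight `w_q(S)` has additive order `q`, and `t > 0` is the length of a maximal run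
of `0` in `S`, then every `T ∈ D⁻¹(S)` has period `qm` and contains a maximal run
`a^{t+1}` for each `a ∈ ℤ_q`. -/
theorem Dinv_period_and_maximal_runs {q n m t : ℕ} (hq : 2 ≤ q) (hn : 1 ≤ n)
    (s : ℤ → ZMod q) (hS : IsOS s n m) (hw : addOrderOf (wq s m) = q)
    (ht : 0 < t) (hrun : IsMaxRun s 0 t) :
    ∀ T : ℤ → ZMod q, D T = s →
      IsPeriod T (q * m) ∧ ∀ a : ZMod q, IsMaxRun T a (t + 1) :=
  Dinv_period_and_maximal_runs_general hq s hS hw hrun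
end

section
/- Let q ≥ 2 and n ≥ 1 be integers, and suppose S = (s_i) is an orientable sequence of order n and even period m over ℤ_q, and that the alternating sign weight w^A_q(S) has additive order h in ℤ_q. Then A^{-1}(S) consists of h shifts of each of q/h mutually o-disjoint orientable sequences of order n+1 and period hm which are alternating sign translates of one another. -/
/-!
`A t = s` says `t (j + 1) = s j - t j`, so a solution is determined by `t 0`, and two solutions
differ by `j ↦ (-1)^j c`. If `s` has even period `m`, shifting a solution by `m` is again a
solution whose value at `0` is larger by `w = w^A_q(S)`; hence shifting by `a m` adds `a w`.
Writing `t 0 = k + α w` with `k < q/h`, `α < h` exhibits every solution as the shift by `α m` of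
the solution `F_k` with `F_k 0 = k`. Equal `(n+1)`-windows of `F_k` and `F_k'` give equal
`n`-windows of `s` (as `A` acts on windows), so their positions differ by some `a m`, and then
`k = k' + a w`, which forces `k = k'` and `h ∣ a`. Reversed windows are excluded because `A`
commutes with reversal of windows.
-/

namespace OSeq

section Primitive

variable {G : Type*} [AddCommGroup G]

noncomputable def primitive (f : ℤ → G) (j : ℤ) : G :=
  ∑ i ∈ Finset.Ico 0 j, f i - ∑ i ∈ Finset.Ico j 0, f i

@[simp]
lemma primitive_zero (f : ℤ → G) : primitive f 0 = 0 := by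
  simp [primitive]

lemma primitive_add_one (f : ℤ → G) (j : ℤ) : primitive f (j + 1) = primitive f j + f j := by
  unfold primitive
  rcases le_or_gt 0 j with hj | hj
  · rw [← Finset.sum_Ico_add_eq_sum_Ico_add_one hj, Finset.Ico_eq_empty_of_le hj,
      Finset.Ico_eq_empty_of_le (by omega : (0 : ℤ) ≤ j + 1)]
    abel
  · rw [← Finset.insert_Ico_add_one_left_eq_Ico hj, Finset.sum_insert (by simp),
      Finset.Ico_eq_empty_of_le hj.le, Finset.Ico_eq_empty_of_le (by omega : j + 1 ≤ 0)]
    abel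

end Primitive

variable {q : ℕ}

def altSign (j : ℤ) : ZMod q := (j.negOnePow : ℤ)

@[simp]
lemma altSign_zero : (altSign 0 : ZMod q) = 1 := by
  simp [altSign]

lemma altSign_add_one (j : ℤ) : (altSign (j + 1) : ZMod q) = -altSign j := by
  simp [altSign, Int.negOnePow_succ]

lemma altSign_mul_self (j : ℤ) : (altSign j : ZMod q) * altSign j = 1 := by
  rw [altSign, ← Int.cast_mul, ← Units.val_mul, Int.units_mul_self, Units.val_one, Int.cast_one]

lemma altSign_eq_ite (j : ℤ) : (altSign j : ZMod q) = if j % 2 = 0 then 1 else -1 := by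
  split_ifs with hj
  · simp [altSign, Int.negOnePow_even j (Int.even_iff.mpr hj)]
  · simp [altSign, Int.negOnePow_odd j (Int.odd_iff.mpr (by omega))]

lemma A_shift (t : ℤ → ZMod q) (c : ℤ) : A (shift t c) = shift (A t) c := by
  funext j
  simp only [A, shift, add_right_comm]

lemma shift_shift (t : ℤ → ZMod q) (a b : ℤ) : shift (shift t a) b = shift t (a + b) := by
  funext j
  simp only [shift, add_assoc, add_comm b]

lemma eq_of_A_eq_of_eq_zero {t t' : ℤ → ZMod q} (h : A t = A t') (h0 : t 0 = t' 0) :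
    t = t' := by
  have step (j : ℤ) : t (j + 1) - t' (j + 1) = -(t j - t' j) := by
    have hj := congrFun h j
    simp only [A] at hj
    linear_combination hj
  funext j
  rw [← sub_eq_zero]
  induction j using Int.induction_on with
  | zero => rw [h0, sub_self]
  | succ j ih => rw [step, ih, neg_zero]
  | pred j ih => rwa [← neg_eq_zero, ← step, sub_add_cancel]

/-- Writing `t j = (-1)^j u j`, the equation `A t = s` becomes `u (j + 1) - u j = -(-1)^j s j`. -/
noncomputable def Ainv (s : ℤ → ZMod q) (c : ZMod q) : ℤ → ZMod q :=
  fun j => altSign j * (c - primitive (fun i => altSign i * s i) j)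

@[simp]
lemma Ainv_zero (s : ℤ → ZMod q) (c : ZMod q) : Ainv s c 0 = c := by
  simp [Ainv]

lemma A_Ainv (s : ℤ → ZMod q) (c : ZMod q) : A (Ainv s c) = s := by
  funext j
  simp only [A, Ainv, primitive_add_one, altSign_add_one]
  linear_combination (s j) * altSign_mul_self (q := q) j

lemma Ainv_eq_add_altSign (s : ℤ → ZMod q) (c c' : ZMod q) (j : ℤ) :
    Ainv s c' j = Ainv s c j + altSign j * (c' - c) := by
  simp only [Ainv]
  ring

lemma eq_of_Ainv_eq {s : ℤ → ZMod q} {c c' : ZMod q} {j : ℤ} (h : Ainv s c j = Ainv s c' j) :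
    c = c' := by
  have e := Ainv_eq_add_altSign s c' c j
  linear_combination (c' - c) * altSign_mul_self (q := q) j + altSign j * (h - e)

lemma A_eq_iff_eq_Ainv {s t : ℤ → ZMod q} : A t = s ↔ t = Ainv s (t 0) :=
  ⟨fun h => eq_of_A_eq_of_eq_zero (by rw [h, A_Ainv]) (Ainv_zero s _).symm,
    fun h => h ▸ A_Ainv s _⟩

lemma wqA_succ (s : ℤ → ZMod q) (k : ℕ) : wqA s (k + 1) = s k - wqA s k := by
  have flip : ∀ i ∈ Finset.range k,
      (-1 : ZMod q) ^ (k + 1 - 1 - i) * s i = -((-1) ^ (k - 1 - i) * s i) := by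
    intro i hi
    rw [show k + 1 - 1 - i = k - 1 - i + 1 by simp at hi; omega, pow_succ]
    ring
  rw [wqA, wqA, Finset.sum_range_succ, Finset.sum_congr rfl flip, Finset.sum_neg_distrib,
    Nat.add_sub_cancel, Nat.sub_self, pow_zero, one_mul, sub_eq_neg_add, add_comm]

lemma eq_neg_one_pow_mul_add_wqA {s t : ℤ → ZMod q} (ht : A t = s) (k : ℕ) :
    t k = (-1) ^ k * t 0 + wqA s k := by
  induction k with
  | zero => simp [wqA]
  | succ k ih =>
    have hk := congrFun ht k
    simp only [A] at hk
    rw [wqA_succ, pow_succ, Nat.cast_succ]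
    linear_combination hk - ih

lemma shift_Ainv {s : ℤ → ZMod q} {m : ℕ} (hper : Function.Periodic s m) (hm : Even m)
    (c : ZMod q) : shift (Ainv s c) m = Ainv s (c + wqA s m) := by
  have hA : A (shift (Ainv s c) m) = s := by rw [A_shift, A_Ainv]; exact funext hper
  rw [A_eq_iff_eq_Ainv.mp hA]
  congr 1
  simp only [shift, zero_add, eq_neg_one_pow_mul_add_wqA (A_Ainv s c) m, Ainv_zero,
    hm.neg_one_pow, one_mul]

lemma shift_Ainv_mul {s : ℤ → ZMod q} {m : ℕ} (hper : Function.Periodic s m) (hm : Even m)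
    (a : ℤ) (c : ZMod q) : shift (Ainv s c) (a * m) = Ainv s (c + a * wqA s m) := by
  induction a using Int.induction_on generalizing c with
  | zero => funext j; simp [shift]
  | succ a ih =>
    rw [add_mul, one_mul, ← shift_shift, ih, shift_Ainv hper hm]
    congr 1
    push_cast
    ring
  | pred a ih =>
    have hc := shift_Ainv hper hm (c - wqA s m)
    rw [sub_add_cancel] at hc
    rw [← hc, shift_shift, show (m : ℤ) + (-(a : ℤ) - 1) * m = -a * m by ring, ih]
    congr 1
    push_cast
    ring

section AddOrder

lemma intCast_mul_eq_zero_iff (w : ZMod q) (a : ℤ) :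
    (a : ZMod q) * w = 0 ↔ (addOrderOf w : ℤ) ∣ a := by
  rw [addOrderOf_dvd_iff_zsmul_eq_zero, zsmul_eq_mul]

variable [NeZero q]

lemma addOrderOf_dvd_zmod (w : ZMod q) : addOrderOf w ∣ q := by
  simpa using addOrderOf_dvd_natCard w

lemma eq_of_natCast_eq_add_intCast_mul {w : ZMod q} {k k' : ℕ} (hk : k < q / addOrderOf w)
    (hk' : k' < q / addOrderOf w) {a : ℤ} (h : (k : ZMod q) = k' + a * w) : k = k' := by
  have hpos := addOrderOf_pos w
  have hq :
      (addOrderOf w : ℤ) * (q / addOrderOf w : ℕ) ∣ addOrderOf w * ((k : ℤ) - k') := by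
    rw [← Nat.cast_mul, Nat.mul_div_cancel' (addOrderOf_dvd_zmod w),
      ← ZMod.intCast_zmod_eq_zero_iff_dvd]
    push_cast
    rw [h, add_sub_cancel_left, mul_left_comm, ← nsmul_eq_mul, addOrderOf_nsmul_eq_zero,
      mul_zero]
  have := Int.eq_zero_of_abs_lt_dvd (Int.dvd_of_mul_dvd_mul_left (by omega) hq)
    (abs_lt.mpr ⟨by omega, by omega⟩)
  omega

lemma bijective_natCast_add_mul (w : ZMod q) :
    Function.Bijective fun p : Fin (q / addOrderOf w) × Fin (addOrderOf w) =>
      ((p.1 : ℕ) : ZMod q) + ((p.2 : ℕ) : ZMod q) * w := by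
  refine (Fintype.bijective_iff_injective_and_card _).mpr ⟨?_, ?_⟩
  · rintro ⟨k, α⟩ ⟨k', α'⟩ he
    simp only at he
    have hk : (k : ℕ) = k' := eq_of_natCast_eq_add_intCast_mul k.isLt k'.isLt
      (a := (α' : ℤ) - α) (by push_cast; linear_combination he)
    rw [hk, add_right_inj, ← sub_eq_zero, ← sub_mul] at he
    have hdvd := (intCast_mul_eq_zero_iff w ((α : ℤ) - α')).mp (by push_cast; exact he)
    have := Int.eq_zero_of_abs_lt_dvd hdvd (abs_lt.mpr ⟨by omega, by omega⟩)
    exact Prod.ext (Fin.ext hk) (Fin.ext (by dsimp only; omega))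
  · simp [Nat.div_mul_cancel (addOrderOf_dvd_zmod w)]

end AddOrder

def tupA {n : ℕ} (u : Fin (n + 1) → ZMod q) : Fin n → ZMod q :=
  fun k => u k.succ + u k.castSucc

lemma window_A (t : ℤ → ZMod q) (n : ℕ) (i : ℤ) :
    window (A t) n i = tupA (window t (n + 1) i) := by
  funext k
  simp only [window, A, tupA, Fin.val_succ, Fin.val_castSucc, Nat.cast_succ, add_assoc]

lemma tupA_tupRev {n : ℕ} (u : Fin (n + 1) → ZMod q) : tupA (tupRev u) = tupRev (tupA u) := by
  funext k
  simp only [tupA, tupRev, Fin.rev_succ, Fin.rev_castSucc, add_comm]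

lemma window_ne_tupRev_of_A_eq {s t t' : ℤ → ZMod q} {n : ℕ} (ht : A t = s) (ht' : A t' = s)
    (hs : ∀ i j, window s n i ≠ tupRev (window s n j)) (i j : ℤ) :
    window t (n + 1) i ≠ tupRev (window t' (n + 1) j) := by
  intro H
  have := congrArg tupA H
  rw [← window_A, tupA_tupRev, ← window_A, ht, ht'] at this
  exact hs i j this

lemma isPeriod_of_window {t : ℤ → ZMod q} {n p : ℕ} (hp : 0 < p)
    (hper : Function.Periodic t p)
    (hwin : ∀ i j, window t n i = window t n j → i ≡ j [ZMOD p]) :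
    IsPeriod t p := by
  refine ⟨hp, hper, fun p' hp' hper' => ?_⟩
  have hwin0 : window t n 0 = window t n p' :=
    funext fun k => by simp only [window, zero_add, add_comm (p' : ℤ), hper']
  have hdvd := (hwin 0 p' hwin0).dvd
  exact Nat.le_of_dvd hp' (by exact_mod_cast (sub_zero (p' : ℤ)) ▸ hdvd)

lemma exists_eq_add_mul_of_window_Ainv_eq {s : ℤ → ZMod q} {n m : ℕ} (hS : IsNWindowSeq s n m)
    (hm : Even m) {c c' : ZMod q} {i j : ℤ}
    (H : window (Ainv s c) (n + 1) i = window (Ainv s c') (n + 1) j) :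
    ∃ a : ℤ, j = i + a * m ∧ c = c' + a * wqA s m := by
  have hs : window s n i = window s n j := by
    have := congrArg tupA H
    rwa [← window_A, ← window_A, A_Ainv, A_Ainv] at this
  obtain ⟨a, ha⟩ := (hS.2 i j hs).dvd
  have hj : j = i + a * m := by linear_combination ha
  refine ⟨a, hj, eq_of_Ainv_eq (s := s) (j := i) ?_⟩
  rw [← shift_Ainv_mul hS.1.2.1 hm]
  simpa [window, shift, hj] using congrFun H 0

lemma isOS_Ainv [NeZero q] {s : ℤ → ZMod q} {n m : ℕ} (hS : IsOS s n m) (hm : Even m)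
    (c : ZMod q) : IsOS (Ainv s c) (n + 1) (addOrderOf (wqA s m) * m) := by
  have hwin : ∀ i j, window (Ainv s c) (n + 1) i = window (Ainv s c) (n + 1) j →
      i ≡ j [ZMOD (addOrderOf (wqA s m) * m : ℕ)] := by
    intro i j H
    obtain ⟨a, rfl, ha⟩ := exists_eq_add_mul_of_window_Ainv_eq hS.1 hm H
    have hdvd := (intCast_mul_eq_zero_iff (wqA s m) a).mp (by linear_combination -ha)
    exact Int.modEq_iff_dvd.mpr (by push_cast; simpa using mul_dvd_mul_right hdvd (m : ℤ))
  have hper : Function.Periodic (Ainv s c) (addOrderOf (wqA s m) * m : ℕ) := by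
    intro i
    have hw : ((addOrderOf (wqA s m) : ℕ) : ZMod q) * wqA s m = 0 := by
      rw [← nsmul_eq_mul, addOrderOf_nsmul_eq_zero]
    have := congrFun (shift_Ainv_mul hS.1.1.2.1 hm (addOrderOf (wqA s m) : ℤ) c) i
    rw [Int.cast_natCast, hw, add_zero] at this
    simpa [shift] using this
  exact ⟨⟨isPeriod_of_window (Nat.mul_pos (addOrderOf_pos _) hS.1.1.1) hper hwin, hwin⟩,
    window_ne_tupRev_of_A_eq (A_Ainv s c) (A_Ainv s c) hS.2⟩

lemma oDisjoint_Ainv [NeZero q] {s : ℤ → ZMod q} {n m : ℕ} (hS : IsOS s n m) (hm : Even m)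
    {k k' : ℕ} (hk : k < q / addOrderOf (wqA s m)) (hk' : k' < q / addOrderOf (wqA s m))
    (hne : k ≠ k') : ODisjoint (n + 1) (Ainv s k) (Ainv s k') := by
  refine ⟨fun i j H => ?_, window_ne_tupRev_of_A_eq (A_Ainv s k) (A_Ainv s k') hS.2⟩
  obtain ⟨a, -, ha⟩ := exists_eq_add_mul_of_window_Ainv_eq hS.1 hm H
  exact hne (eq_of_natCast_eq_add_intCast_mul hk hk' ha)

lemma isAltTranslate_Ainv (s : ℤ → ZMod q) (c c' : ZMod q) :
    IsAltTranslate (Ainv s c) (Ainv s c') :=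
  ⟨c' - c, fun i => by rw [Ainv_eq_add_altSign s c c' i, altSign_eq_ite]; split_ifs <;> ring⟩

end OSeq

open OSeq
theorem Ainv_of_orientable_even_period_general {q n m h : ℕ} (hq : 2 ≤ q)
    (s : ℤ → ZMod q) (hS : IsOS s n m) (hm : Even m)
    (hh : addOrderOf (wqA s m) = h) :
    ∃ F : Fin (q / h) → ℤ → ZMod q,
      (∀ k, A (F k) = s ∧ IsOS (F k) (n + 1) (h * m)) ∧
      (∀ k k', k ≠ k' → ODisjoint (n + 1) (F k) (F k')) ∧
      (∀ k k', IsAltTranslate (F k) (F k')) ∧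
      (∀ t : ℤ → ZMod q, A t = s ↔
        ∃ (k : Fin (q / h)) (α : Fin h), t = shift (F k) ((α : ℕ) * (m : ℤ))) ∧
      Function.Injective
        (fun p : Fin (q / h) × Fin h => shift (F p.1) ((p.2 : ℕ) * (m : ℤ))) := by
  have : NeZero q := ⟨by omega⟩
  subst hh
  have hΦ := bijective_natCast_add_mul (wqA s m)
  have hshift (k : Fin (q / addOrderOf (wqA s m))) (α : Fin (addOrderOf (wqA s m))) :
      shift (Ainv s (k : ℕ)) ((α : ℕ) * (m : ℤ)) =
        Ainv s ((k : ℕ) + (α : ℕ) * wqA s m) := by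
    simpa using shift_Ainv_mul hS.1.1.2.1 hm (α : ℕ) ((k : ℕ) : ZMod q)
  refine ⟨fun k => Ainv s (k : ℕ), fun k => ⟨A_Ainv s _, isOS_Ainv hS hm _⟩,
    fun k k' hne => oDisjoint_Ainv hS hm k.isLt k'.isLt (Fin.val_injective.ne hne),
    fun k k' => isAltTranslate_Ainv s _ _, fun t => ?_, fun p p' he => hΦ.injective ?_⟩
  · simp only [hshift, A_eq_iff_eq_Ainv]
    constructor
    · intro ht
      obtain ⟨⟨k, α⟩, hkα⟩ := hΦ.surjective (t 0)
      exact ⟨k, α, ht.trans (congrArg _ hkα.symm)⟩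
    · rintro ⟨k, α, rfl⟩
      rw [Ainv_zero]
  · simpa [hshift] using congrFun he 0

/-- If `S` is an orientable sequence of order `n` and even period `m` over `ℤ_q`
and the alternating sign weight `w^A_q(S)` has additive order `h` in `ℤ_q`, then
`A⁻¹(S)` consists of `h` shifts of each of `q/h` mutually o-disjoint orientable
sequences of order `n+1` and period `hm` which are alternating sign translates
of one another. -/
theorem Ainv_of_orientable_even_period {q n m h : ℕ} (hq : 2 ≤ q) (hn : 1 ≤ n)
    (s : ℤ → ZMod q) (hS : IsOS s n m) (hm : Even m)
    (hh : addOrderOf (wqA s m) = h) :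
    ∃ F : Fin (q / h) → ℤ → ZMod q,
      (∀ k, A (F k) = s ∧ IsOS (F k) (n + 1) (h * m)) ∧
      (∀ k k', k ≠ k' → ODisjoint (n + 1) (F k) (F k')) ∧
      (∀ k k', IsAltTranslate (F k) (F k')) ∧
      (∀ t : ℤ → ZMod q, A t = s ↔
        ∃ (k : Fin (q / h)) (α : Fin h), t = shift (F k) ((α : ℕ) * (m : ℤ))) ∧
      Function.Injective
        (fun p : Fin (q / h) × Fin h => shift (F p.1) ((p.2 : ℕ) * (m : ℤ))) :=
  Ainv_of_orientable_even_period_general hq s hS hm hh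
end
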